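/- arXiv:2005.07736 — 3 statements merged into one kernel-verified Lean document; each statement's English description precedes it below -/
import Mathlib

section
/- Let d = k = 5. The orbit of the row vector δ₄ = (0,0,0,1) ∈ (ℤ/2ℤ)⁴ under right multiplication by the subgroup H₂(5,5) of GL(4, ℤ/2ℤ) generated by the reductions modulo 2 of M₀(5,5) and M₁ is exactly the set {(0,0,0,1), (0,0,1,0), (0,1,1,0), (0,1,1,1), (1,0,0,0), (1,0,1,0), (1,1,0,0), (1,1,0,1), (1,1,1,0), (1,1,1,1)}. -/
/-!
`H₂(5,5)` is finite, so it is the monoid generated by the reductions of `M₀(5,5)` and `M₁`, and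
the orbit of `δ₄` is the smallest set of row vectors containing `δ₄` and stable under right
multiplication by these two matrices. A breadth-first search from `δ₄` computes it: four rounds
reach the ten listed vectors and a fifth adds nothing new.
-/

/-- The monodromy matrix `M₀(d,k)` around `0` of the Picard–Fuchs equation of certain
mirror Calabi–Yau threefolds. -/
def M0 (d k : ℤ) : Matrix (Fin 4) (Fin 4) ℤ :=
  !![1, 1, 0, 0; 0, 1, 0, 0; d, d, 1, 0; 0, -k, -1, 1]

/-- The monodromy matrix `M₁` around `1`. -/
def M1 : Matrix (Fin 4) (Fin 4) ℤ :=
  !![1, 0, 0, 0; 0, 1, 0, 1; 0, 0, 1, 0; 0, 0, 0, 1]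

lemma M0_det (d k : ℤ) : (M0 d k).det = 1 := by
  simp [M0, Matrix.det_succ_row_zero, Fin.sum_univ_succ, Fin.succAbove]

lemma M1_det : M1.det = 1 := by
  simp [M1, Matrix.det_succ_row_zero, Fin.sum_univ_succ, Fin.succAbove]

/-- The reduction modulo `p` of `M₀(d,k)`, as an element of `GL (Fin 4) (ZMod p)`. -/
noncomputable def M0p (p : ℕ) (d k : ℤ) : GL (Fin 4) (ZMod p) :=
  Matrix.nonsingInvUnit ((M0 d k).map (Int.castRingHom (ZMod p)))
    (by rw [← RingHom.mapMatrix_apply, ← RingHom.map_det, M0_det]; simp)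

/-- The reduction modulo `p` of `M₁`, as an element of `GL (Fin 4) (ZMod p)`. -/
noncomputable def M1p (p : ℕ) : GL (Fin 4) (ZMod p) :=
  Matrix.nonsingInvUnit (M1.map (Int.castRingHom (ZMod p)))
    (by rw [← RingHom.mapMatrix_apply, ← RingHom.map_det, M1_det]; simp)

open Matrix

section ReachStep

variable {n R : Type*} [Fintype n] [Semiring R] [DecidableEq R]

def reachStep (gens : Finset (Matrix n n R)) (U : Finset (n → R)) : Finset (n → R) :=
  U ∪ U.biUnion fun w => gens.image (w ᵥ* ·)

theorem self_mem_iterate_reachStep (gens : Finset (Matrix n n R)) (v : n → R) (k : ℕ) :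
    v ∈ (reachStep gens)^[k] {v} := by
  induction k with
  | zero => exact Finset.mem_singleton_self v
  | succ k ih =>
    rw [Function.iterate_succ_apply']
    exact Finset.mem_union_left _ ih

theorem vecMul_mem_reachStep {gens : Finset (Matrix n n R)} {U : Finset (n → R)} {w : n → R}
    {A : Matrix n n R} (hw : w ∈ U) (hA : A ∈ gens) : w ᵥ* A ∈ reachStep gens U :=
  Finset.mem_union_right _ (Finset.mem_biUnion.2 ⟨w, hw, Finset.mem_image_of_mem _ hA⟩)

end ReachStep

section RowOrbit

variable {n R : Type*} [Fintype n] [DecidableEq n] [CommRing R]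

def rowOrbit (H : Subgroup (GL n R)) (v : n → R) : Set (n → R) :=
  {w | ∃ g ∈ H, w = v ᵥ* (g : Matrix n n R)}

theorem self_mem_rowOrbit (H : Subgroup (GL n R)) (v : n → R) : v ∈ rowOrbit H v :=
  ⟨1, H.one_mem, by simp⟩

theorem vecMul_mem_rowOrbit {H : Subgroup (GL n R)} {v w : n → R} (hw : w ∈ rowOrbit H v)
    {g : GL n R} (hg : g ∈ H) : w ᵥ* (g : Matrix n n R) ∈ rowOrbit H v := by
  obtain ⟨h, hh, rfl⟩ := hw
  exact ⟨h * g, H.mul_mem hh hg, by rw [Units.val_mul, ← vecMul_vecMul]⟩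

theorem reachStep_subset_rowOrbit [DecidableEq R] {H : Subgroup (GL n R)} {v : n → R}
    {gens : Finset (Matrix n n R)} (hgens : ∀ A ∈ gens, ∃ g ∈ H, (g : Matrix n n R) = A)
    {U : Finset (n → R)} (hU : ↑U ⊆ rowOrbit H v) : ↑(reachStep gens U) ⊆ rowOrbit H v := by
  intro w hw
  simp only [reachStep, Finset.coe_union, Finset.coe_biUnion, Set.mem_union, Set.mem_iUnion,
    Finset.coe_image, Set.mem_image, Finset.mem_coe, exists_prop] at hw
  obtain hw | ⟨u, hu, A, hA, rfl⟩ := hw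
  · exact hU hw
  · obtain ⟨g, hg, rfl⟩ := hgens A hA
    exact vecMul_mem_rowOrbit (hU hu) hg

theorem iterate_reachStep_subset_rowOrbit [DecidableEq R] {H : Subgroup (GL n R)}
    {gens : Finset (Matrix n n R)} (hgens : ∀ A ∈ gens, ∃ g ∈ H, (g : Matrix n n R) = A)
    (v : n → R) (k : ℕ) : ↑((reachStep gens)^[k] {v}) ⊆ rowOrbit H v := by
  induction k with
  | zero => simpa using self_mem_rowOrbit H v
  | succ k ih =>
    rw [Function.iterate_succ_apply']
    exact reachStep_subset_rowOrbit hgens ih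

theorem rowOrbit_closure_subset [Finite R] {S : Set (GL n R)} {v : n → R} {T : Set (n → R)}
    (hv : v ∈ T) (hT : ∀ s ∈ S, Set.MapsTo (· ᵥ* (s : Matrix n n R)) T T) :
    rowOrbit (Subgroup.closure S) v ⊆ T := by
  rintro _ ⟨g, hg, rfl⟩
  rw [← Subgroup.mem_toSubmonoid, Subgroup.closure_toSubmonoid_of_finite] at hg
  suffices Set.MapsTo (· ᵥ* (g : Matrix n n R)) T T from this hv
  induction hg using Submonoid.closure_induction with
  | mem s hs => exact hT s hs
  | one => intro w hw; simpa using hw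
  | mul a b _ _ ha hb => intro w hw; simpa [vecMul_vecMul] using hb (ha hw)

theorem rowOrbit_closure_eq_of_reachStep [Finite R] [DecidableEq R] {S : Set (GL n R)}
    {gens : Finset (Matrix n n R)} (hgens : Units.val '' S = gens) {v : n → R}
    {U : Finset (n → R)} (k : ℕ) (hreach : (reachStep gens)^[k] {v} = U)
    (hstable : reachStep gens U = U) :
    rowOrbit (Subgroup.closure S) v = U := by
  refine subset_antisymm (rowOrbit_closure_subset (S := S) ?_ fun s hs w hw => ?_) ?_
  · exact hreach ▸ self_mem_iterate_reachStep gens v k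
  · show w ᵥ* (s : Matrix n n R) ∈ (U : Set (n → R))
    rw [← hstable]
    exact vecMul_mem_reachStep hw (by rw [← Finset.mem_coe, ← hgens]; exact ⟨s, hs, rfl⟩)
  · have hgens' : ∀ A ∈ gens, ∃ g ∈ Subgroup.closure S, (g : Matrix n n R) = A := by
      intro A hA
      obtain ⟨g, hg, rfl⟩ := hgens.symm ▸ Finset.mem_coe.2 hA
      exact ⟨g, Subgroup.subset_closure hg, rfl⟩
    exact hreach ▸ iterate_reachStep_subset_rowOrbit hgens' v k

end RowOrbit

theorem orbit2_delta4_55 :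
    {w : Fin 4 → ZMod 2 |
      ∃ g ∈ Subgroup.closure {M0p 2 5 5, M1p 2},
        w = Matrix.vecMul ![0,0,0,1] (g : Matrix (Fin 4) (Fin 4) (ZMod 2))} =
    {![0,0,0,1], ![0,0,1,0], ![0,1,1,0], ![0,1,1,1], ![1,0,0,0], ![1,0,1,0], ![1,1,0,0], ![1,1,0,1], ![1,1,1,0], ![1,1,1,1]} := by
  have hgens : Units.val '' {M0p 2 5 5, M1p 2} =
      (({↑(M0p 2 5 5), ↑(M1p 2)} : Finset (Matrix (Fin 4) (Fin 4) (ZMod 2))) : Set _) := by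
    simp [Set.image_insert_eq]
  have key := rowOrbit_closure_eq_of_reachStep hgens (v := ![0,0,0,1])
    (U := {![0,0,0,1], ![0,0,1,0], ![0,1,1,0], ![0,1,1,1], ![1,0,0,0], ![1,0,1,0], ![1,1,0,0],
      ![1,1,0,1], ![1,1,1,0], ![1,1,1,1]}) 4 (by decide) (by decide)
  simp only [Finset.coe_insert, Finset.coe_singleton] at key
  exact key
end

section
/- Let d = k = 5. The orbit of the row vector δ₂ = (0,1,0,0) ∈ (ℤ/5ℤ)⁴ under right multiplication by the subgroup H₅(5,5) of GL(4, ℤ/5ℤ) generated by the reductions modulo 5 of M₀(5,5) and M₁ is exactly the set {(0,1,a,b) : a, b ∈ ℤ/5ℤ} of 25 vectors. -/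
/-!
Once `p ∣ d` and `p ∣ k`, both generators preserve the affine plane `{(0,1,a,b)}`: `M₁` sends
`(0,1,a,b)` to `(0,1,a,b+1)` and `M₀` sends it to `(0,1,a-b,b)`. An invertible map sending a
finite set into itself permutes it, so its inverse preserves the set too; hence the whole group
preserves the plane, which contains `δ₂`. Conversely `δ₂ M₁ M₀ⁿ M₁ᵐ = (0,1,-n,1+m)` reaches every
point of the plane.
-/

open Matrix Set

theorem mapsTo_vecMul_of_mem_closure {n R : Type*} [Fintype n] [DecidableEq n] [CommRing R]
    {S : Set (n → R)} (hS : S.Finite) {T : Set (GL n R)}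
    (hT : ∀ g ∈ T, MapsTo (· ᵥ* (g : Matrix n n R)) S S) {g : GL n R}
    (hg : g ∈ Subgroup.closure T) : MapsTo (· ᵥ* (g : Matrix n n R)) S S := by
  induction hg using Subgroup.closure_induction with
  | mem g hg => exact hT g hg
  | one => exact fun v hv => by simpa using hv
  | mul g h _ _ hg hh =>
    intro v hv
    simpa [vecMul_vecMul] using hh (hg hv)
  | inv g _ hg =>
    have hinj : InjOn (· ᵥ* (g : Matrix n n R)) S := fun u _ v _ huv => by
      simpa using congrArg (· ᵥ* ((g⁻¹ : GL n R) : Matrix n n R)) huv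
    intro v hv
    obtain ⟨u, hu, rfl⟩ := ((hS.injOn_iff_bijOn_of_mapsTo hg).mp hinj).surjOn hv
    simpa [vecMul_vecMul] using hu

section

variable {R : Type*} [CommRing R]

lemma vecMul_map_M0 (d k : ℤ) (x : Fin 4 → R) :
    x ᵥ* (M0 d k).map (Int.castRingHom R) =
      ![x 0 + d * x 2, x 0 + x 1 + d * x 2 - k * x 3, x 2 - x 3, x 3] := by
  ext j
  fin_cases j <;> simp [M0, vecMul, dotProduct, Fin.sum_univ_four] <;> ring

lemma vecMul_map_M1 (x : Fin 4 → R) :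
    x ᵥ* M1.map (Int.castRingHom R) = ![x 0, x 1, x 2, x 1 + x 3] := by
  ext j
  fin_cases j <;> simp [M1, vecMul, dotProduct, Fin.sum_univ_four, add_comm]

end

section

variable {p : ℕ} {d k : ℤ}

lemma coe_M0p : (M0p p d k : Matrix (Fin 4) (Fin 4) (ZMod p)) = (M0 d k).map (Int.castRingHom _) :=
  rfl

lemma coe_M1p : (M1p p : Matrix (Fin 4) (Fin 4) (ZMod p)) = M1.map (Int.castRingHom _) :=
  rfl

lemma vecMul_M0p (hd : (p : ℤ) ∣ d) (hk : (p : ℤ) ∣ k) (a b : ZMod p) :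
    ![0, 1, a, b] ᵥ* (M0p p d k : Matrix (Fin 4) (Fin 4) (ZMod p)) = ![0, 1, a - b, b] := by
  have hd0 : (d : ZMod p) = 0 := (ZMod.intCast_zmod_eq_zero_iff_dvd d p).mpr hd
  have hk0 : (k : ZMod p) = 0 := (ZMod.intCast_zmod_eq_zero_iff_dvd k p).mpr hk
  rw [coe_M0p, vecMul_map_M0]
  simp [hd0, hk0]

lemma vecMul_M1p (a b : ZMod p) :
    ![0, 1, a, b] ᵥ* (M1p p : Matrix (Fin 4) (Fin 4) (ZMod p)) = ![0, 1, a, b + 1] := by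
  rw [coe_M1p, vecMul_map_M1]
  simp [add_comm]

lemma vecMul_M0p_pow (hd : (p : ℤ) ∣ d) (hk : (p : ℤ) ∣ k) (n : ℕ) (a b : ZMod p) :
    ![0, 1, a, b] ᵥ* ((M0p p d k ^ n : GL (Fin 4) (ZMod p)) : Matrix (Fin 4) (Fin 4) (ZMod p)) =
      ![0, 1, a - n * b, b] := by
  induction n with
  | zero => simp
  | succ n ih =>
    rw [pow_succ, Units.val_mul, ← vecMul_vecMul, ih, vecMul_M0p hd hk]
    push_cast
    ring_nf

lemma vecMul_M1p_pow (n : ℕ) (a b : ZMod p) :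
    ![0, 1, a, b] ᵥ* ((M1p p ^ n : GL (Fin 4) (ZMod p)) : Matrix (Fin 4) (Fin 4) (ZMod p)) =
      ![0, 1, a, b + n] := by
  induction n with
  | zero => simp
  | succ n ih =>
    rw [pow_succ, Units.val_mul, ← vecMul_vecMul, ih, vecMul_M1p]
    push_cast
    ring_nf

theorem orbit_delta2_of_dvd [NeZero p] (hd : (p : ℤ) ∣ d) (hk : (p : ℤ) ∣ k) :
    {w : Fin 4 → ZMod p | ∃ g ∈ Subgroup.closure {M0p p d k, M1p p},
        w = ![0, 1, 0, 0] ᵥ* (g : Matrix (Fin 4) (Fin 4) (ZMod p))} =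
      {w | ∃ a b : ZMod p, w = ![0, 1, a, b]} := by
  ext w
  constructor
  · rintro ⟨g, hg, rfl⟩
    refine mapsTo_vecMul_of_mem_closure (toFinite _) ?_ hg ⟨0, 0, rfl⟩
    rintro g (rfl | rfl) _ ⟨a, b, rfl⟩
    · exact ⟨a - b, b, vecMul_M0p hd hk a b⟩
    · exact ⟨a, b + 1, vecMul_M1p a b⟩
  · rintro ⟨a, b, rfl⟩
    obtain ⟨n, hn⟩ := ZMod.natCast_zmod_surjective (-a)
    obtain ⟨m, hm⟩ := ZMod.natCast_zmod_surjective (b - 1)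
    have hM0 : M0p p d k ∈ Subgroup.closure {M0p p d k, M1p p} := Subgroup.subset_closure (by simp)
    have hM1 : M1p p ∈ Subgroup.closure {M0p p d k, M1p p} := Subgroup.subset_closure (by simp)
    refine ⟨M1p p * M0p p d k ^ n * M1p p ^ m,
      mul_mem (mul_mem hM1 (pow_mem hM0 n)) (pow_mem hM1 m), ?_⟩
    have hδ₂ : ![0, 1, 0, 0] ᵥ* (M1p p : Matrix (Fin 4) (Fin 4) (ZMod p)) = ![0, 1, 0, 1] := by
      simpa using vecMul_M1p (p := p) 0 0
    rw [Units.val_mul, Units.val_mul, ← vecMul_vecMul, ← vecMul_vecMul, hδ₂, vecMul_M0p_pow hd hk,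
      vecMul_M1p_pow, hn, hm]
    simp

end

theorem orbit5_delta2_55 :
    {w : Fin 4 → ZMod 5 |
      ∃ g ∈ Subgroup.closure {M0p 5 5 5, M1p 5},
        w = Matrix.vecMul ![0,1,0,0] (g : Matrix (Fin 4) (Fin 4) (ZMod 5))} =
    {w : Fin 4 → ZMod 5 | ∃ a b : ZMod 5, w = ![0, 1, a, b]} :=
  orbit_delta2_of_dvd dvd_rfl dvd_rfl
end

section
/- Let d = 6 and k = 5. The orbit of the row vector δ₄ = (0,0,0,1) ∈ (ℤ/3ℤ)⁴ under right multiplication by the subgroup H₃(6,5) of GL(4, ℤ/3ℤ) generated by the reductions modulo 3 of M₀(6,5) and M₁ is exactly the set {(0,0,0,1), (0,0,0,2), (0,1,2,0), (0,1,2,1), (0,1,2,2), (0,2,1,0), (0,2,1,1), (0,2,1,2)}. -/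
/-! An invertible matrix mapping a finite set `T` of row vectors into itself permutes `T`, so the
matrices preserving `T` form a subgroup of `GL n R`; hence stability of the eight vectors under the
two generators bounds the whole orbit. Conversely, each of the eight vectors is reached from `δ₄`
by a short word in the generators. -/

namespace Matrix.GeneralLinearGroup

variable {n R : Type*} [Fintype n] [DecidableEq n] [Semiring R]

lemma vecMul_inv_mem_of_forall_vecMul_mem {T : Finset (n → R)} {g : GL n R}
    (hg : ∀ v ∈ T, v ᵥ* (g : Matrix n n R) ∈ T) {v : n → R} (hv : v ∈ T) :
    v ᵥ* ((g⁻¹ : GL n R) : Matrix n n R) ∈ T := by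
  have hinj : Set.InjOn (· ᵥ* (g : Matrix n n R)) T := fun u _ w _ huw => by
    simpa [vecMul_vecMul] using congr_arg (· ᵥ* ((g⁻¹ : GL n R) : Matrix n n R)) huw
  obtain ⟨u, hu, rfl⟩ := Finset.surjOn_of_injOn_of_card_le _ hg hinj le_rfl hv
  simpa [vecMul_vecMul] using hu

def vecMulStabilizer (T : Finset (n → R)) : Subgroup (GL n R) where
  carrier := {g | ∀ v ∈ T, v ᵥ* (g : Matrix n n R) ∈ T}
  one_mem' := by simp
  mul_mem' hg hh v hv := by simpa [← vecMul_vecMul] using hh _ (hg v hv)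
  inv_mem' hg _ hv := vecMul_inv_mem_of_forall_vecMul_mem hg hv

@[simp]
lemma mem_vecMulStabilizer {T : Finset (n → R)} {g : GL n R} :
    g ∈ vecMulStabilizer T ↔ ∀ v ∈ T, v ᵥ* (g : Matrix n n R) ∈ T :=
  Iff.rfl

end Matrix.GeneralLinearGroup

open Matrix Matrix.GeneralLinearGroup

def orbitOfδ₄ : Finset (Fin 4 → ZMod 3) :=
  {![0,0,0,1], ![0,0,0,2], ![0,1,2,0], ![0,1,2,1], ![0,1,2,2], ![0,2,1,0], ![0,2,1,1], ![0,2,1,2]}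

lemma closure_le_vecMulStabilizer_orbitOfδ₄ :
    Subgroup.closure {M0p 3 6 5, M1p 3} ≤ vecMulStabilizer orbitOfδ₄ := by
  simp only [Subgroup.closure_le, Set.insert_subset_iff, Set.singleton_subset_iff,
    SetLike.mem_coe, mem_vecMulStabilizer]
  decide

theorem orbit3_delta4_65 :
    {w : Fin 4 → ZMod 3 |
      ∃ g ∈ Subgroup.closure {M0p 3 6 5, M1p 3},
        w = Matrix.vecMul ![0,0,0,1] (g : Matrix (Fin 4) (Fin 4) (ZMod 3))} =
    {![0,0,0,1], ![0,0,0,2], ![0,1,2,0], ![0,1,2,1], ![0,1,2,2], ![0,2,1,0], ![0,2,1,1], ![0,2,1,2]} := by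
  have hA : M0p 3 6 5 ∈ Subgroup.closure {M0p 3 6 5, M1p 3} := Subgroup.subset_closure (by simp)
  have hB : M1p 3 ∈ Subgroup.closure {M0p 3 6 5, M1p 3} := Subgroup.subset_closure (by simp)
  ext w
  constructor
  · rintro ⟨g, hg, rfl⟩
    simpa [orbitOfδ₄] using closure_le_vecMulStabilizer_orbitOfδ₄ hg _ (by decide : _ ∈ orbitOfδ₄)
  · rintro (rfl | rfl | rfl | rfl | rfl | rfl | rfl | rfl)
    exacts [⟨1, one_mem _, by decide⟩,
      ⟨_, mul_mem (mul_mem hA hB) hA, by decide⟩,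
      ⟨_, mul_mem (mul_mem hA hB) hB, by decide⟩,
      ⟨_, hA, by decide⟩,
      ⟨_, mul_mem hA hB, by decide⟩,
      ⟨_, mul_mem (mul_mem hA hA) hB, by decide⟩,
      ⟨_, mul_mem hA hA, by decide⟩,
      ⟨_, mul_mem (mul_mem (mul_mem hA hA) hB) hB, by decide⟩]
end
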